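/- Let R be a commutative ring and M a finite free R-module of rank n. Let Ψ : M → M* = Hom_R(M, R) be an R-module isomorphism, and let M₁ ⊆ M₂ ⊆ M be submodules such that M₁ is free of rank A, M₂/M₁ is free of rank n−2A, M/M₂ is free of rank A, and M/M₁ is free, and such that M₁ and M₂ are perpendicular under Ψ, i.e. Ψ(m₁)(m₂) = 0 and Ψ(m₂)(m₁) = 0 for all m₁ ∈ M₁ and m₂ ∈ M₂. Then the map Ψ̄ : M₂/M₁ → (M₂/M₁)* = Hom_R(M₂/M₁, R) given by Ψ̄(m + M₁)(m' + M₁) = Ψ(m)(m') for m, m' ∈ M₂ is a well-defined R-module isomorphism; i.e. Ψ induces a perfect pairing on M₂/M₁. -/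

import Mathlib

/-!
`Ψ` restricts to a pairing on `M₂` whose left and right kernels contain `M₁`, so it descends to
`Ψ̄` on `W = M₂/M₁`. As `W` and `W*` are free of the same finite rank, a surjective `Ψ̄` is
bijective (commutative rings have the Orzech property). Given `f ∈ W*`, extend it through a
retraction `M → M₂` to a functional on `M` and write it as `Ψ m`. Then `Ψ m` kills `M₁`, and this
forces `m ∈ M₂`: the map `M/M₂ → M₁*`, `m ↦ Ψ m|M₁`, is surjective because `M₁` is a direct
summand of `M`, and it goes between free modules of the same rank `A`, so it is injective.
-/

open Module

section

variable {R : Type*} [CommRing R]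

theorem LinearMap.injective_of_surjective_of_finrank_eq {P Q : Type*}
    [AddCommGroup P] [Module R P] [Free R P] [Module.Finite R P]
    [AddCommGroup Q] [Module R Q] [Free R Q] [Module.Finite R Q]
    (h : finrank R P = finrank R Q) {f : P →ₗ[R] Q} (hf : Function.Surjective f) :
    Function.Injective f := by
  rcases subsingleton_or_nontrivial R with _ | _
  · have := Module.subsingleton R P
    exact Function.injective_of_subsingleton f
  · obtain ⟨e⟩ := FiniteDimensional.nonempty_linearEquiv_of_finrank_eq h
    exact OrzechProperty.injective_of_surjective_of_injective e.toLinearMap f e.injective hf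

theorem Module.finrank_dual_eq (P : Type*) [AddCommGroup P] [Module R P] [Free R P]
    [Module.Finite R P] : finrank R (Dual R P) = finrank R P := by
  classical
  exact (Free.chooseBasis R P).toDualEquiv.finrank_eq.symm

variable {M : Type*} [AddCommGroup M] [Module R M]

theorem Submodule.exists_retraction (p : Submodule R M) [Projective R (M ⧸ p)] :
    ∃ r : M →ₗ[R] p, r ∘ₗ p.subtype = LinearMap.id := by
  obtain ⟨s, hs⟩ := projective_lifting_property p.mkQ LinearMap.id p.mkQ_surjective
  have hsplit := ((LinearMap.exact_subtype_mkQ p).split_tfae p.injective_subtype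
    p.mkQ_surjective).out 0 1
  exact hsplit.mp ⟨s, hs⟩

theorem Submodule.finite_of_projective_quotient (p : Submodule R M) [Module.Finite R M]
    [Projective R (M ⧸ p)] : Module.Finite R p := by
  obtain ⟨r, hr⟩ := p.exists_retraction
  exact .of_surjective r (LinearMap.surjective_of_comp_eq_id p.subtype r hr)

theorem Submodule.dualRestrict_surjective_of_projective (p : Submodule R M)
    [Projective R (M ⧸ p)] : Function.Surjective p.dualRestrict := by
  obtain ⟨r, hr⟩ := p.exists_retraction
  intro g
  refine ⟨g ∘ₗ r, ?_⟩
  ext x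
  rw [p.dualRestrict_apply]
  exact congrArg g (LinearMap.congr_fun hr x)

theorem mem_of_forall_apply_eq_zero_of_finrank_eq (Ψ : M ≃ₗ[R] Dual R M)
    {M₁ M₂ : Submodule R M} [Free R M₁] [Module.Finite R M₁] [Projective R (M ⧸ M₁)]
    [Free R (M ⧸ M₂)] [Module.Finite R (M ⧸ M₂)] (hrank : finrank R (M ⧸ M₂) = finrank R M₁)
    (hperp : ∀ m₁ ∈ M₁, ∀ m₂ ∈ M₂, Ψ m₂ m₁ = 0) {m : M} (hm : ∀ m₁ ∈ M₁, Ψ m m₁ = 0) :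
    m ∈ M₂ := by
  let φ : M →ₗ[R] Dual R M₁ := M₁.dualRestrict ∘ₗ Ψ.toLinearMap
  have hφ : M₂ ≤ LinearMap.ker φ := fun m₂ hm₂ ↦ LinearMap.mem_ker.mpr <|
    LinearMap.ext fun m₁ ↦ hperp m₁ m₁.2 m₂ hm₂
  have hsurj : Function.Surjective (M₂.liftQ φ hφ) := by
    rw [← LinearMap.range_eq_top, Submodule.range_liftQ, LinearMap.range_eq_top]
    exact M₁.dualRestrict_surjective_of_projective.comp Ψ.surjective
  have hinj := LinearMap.injective_of_surjective_of_finrank_eq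
    (hrank.trans (finrank_dual_eq M₁).symm) hsurj
  rw [← Submodule.Quotient.mk_eq_zero, ← LinearMap.map_eq_zero_iff _ hinj]
  exact LinearMap.ext fun m₁ ↦ hm m₁ m₁.2

section Pairing

variable (B : M →ₗ[R] M →ₗ[R] R) (M₁ M₂ : Submodule R M)
  (h₁ : ∀ m₁ ∈ M₁, ∀ m₂ ∈ M₂, B m₁ m₂ = 0) (h₂ : ∀ m₁ ∈ M₁, ∀ m₂ ∈ M₂, B m₂ m₁ = 0)

noncomputable def middleQuotientPairing :
    (M₂ ⧸ M₁.comap M₂.subtype) →ₗ[R] Dual R (M₂ ⧸ M₁.comap M₂.subtype) :=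
  (B.compl₁₂ M₂.subtype M₂.subtype).liftQ₂ _ _
    (fun x hx ↦ LinearMap.ext fun y ↦ h₁ x hx y y.2)
    (fun y hy ↦ LinearMap.ext fun x ↦ h₂ y hy x x.2)

@[simp]
theorem middleQuotientPairing_mk_mk (m m' : M₂) :
    middleQuotientPairing B M₁ M₂ h₁ h₂ (Submodule.Quotient.mk m) (Submodule.Quotient.mk m') =
      B m m' :=
  rfl

end Pairing

theorem middleQuotientPairing_surjective {M₁ M₂ : Submodule R M} (Ψ : M ≃ₗ[R] Dual R M)
    (h12 : M₁ ≤ M₂) [Projective R (M ⧸ M₂)] (h₁ : ∀ m₁ ∈ M₁, ∀ m₂ ∈ M₂, Ψ m₁ m₂ = 0)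
    (h₂ : ∀ m₁ ∈ M₁, ∀ m₂ ∈ M₂, Ψ m₂ m₁ = 0)
    (hM₂ : ∀ m, (∀ m₁ ∈ M₁, Ψ m m₁ = 0) → m ∈ M₂) :
    Function.Surjective (middleQuotientPairing Ψ.toLinearMap M₁ M₂ h₁ h₂) := by
  intro f
  obtain ⟨r, hr⟩ := M₂.exists_retraction
  have hr' : ∀ x : M₂, r x = x := LinearMap.congr_fun hr
  set m := Ψ.symm (f ∘ₗ (M₁.comap M₂.subtype).mkQ ∘ₗ r)
  have hΨm : ∀ x, Ψ m x = f (Submodule.Quotient.mk (r x)) := fun x ↦ by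
    simp [m]
  have hm : m ∈ M₂ := hM₂ m fun m₁ hm₁ ↦ by
    rw [hΨm, hr' ⟨m₁, h12 hm₁⟩,
      (Submodule.Quotient.mk_eq_zero (M₁.comap M₂.subtype) (x := ⟨m₁, h12 hm₁⟩)).mpr hm₁, map_zero]
  refine ⟨Submodule.Quotient.mk ⟨m, hm⟩, LinearMap.ext fun z ↦ ?_⟩
  obtain ⟨m', rfl⟩ := Submodule.Quotient.mk_surjective _ z
  rw [middleQuotientPairing_mk_mk, LinearEquiv.coe_coe, hΨm, hr']

end

theorem middle_quotient_perfect_pairing_of_perp_general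
    (R : Type*) [CommRing R]
    (M : Type*) [AddCommGroup M] [Module R M]
    [Module.Finite R M]
    (A : ℕ)
    (Ψ : M ≃ₗ[R] Module.Dual R M)
    (M₁ M₂ : Submodule R M) (h12 : M₁ ≤ M₂)
    (hM₁free : Module.Free R M₁) (hM₁rank : Module.finrank R M₁ = A)
    (hMidfree : Module.Free R (M₂ ⧸ (M₁.comap M₂.subtype)))
    (hQ₂free : Module.Free R (M ⧸ M₂)) (hQ₂rank : Module.finrank R (M ⧸ M₂) = A)
    (hQ₁free : Module.Free R (M ⧸ M₁))
    (hperp : ∀ m₁ ∈ M₁, ∀ m₂ ∈ M₂, Ψ m₁ m₂ = 0 ∧ Ψ m₂ m₁ = 0) :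
    ∃ Ψbar : (M₂ ⧸ (M₁.comap M₂.subtype)) →ₗ[R]
        Module.Dual R (M₂ ⧸ (M₁.comap M₂.subtype)),
      (∀ m m' : M₂,
        Ψbar (Submodule.Quotient.mk m) (Submodule.Quotient.mk m') = Ψ (m : M) (m' : M)) ∧
      Function.Bijective Ψbar := by
  have h₁ m₁ hm₁ m₂ hm₂ := (hperp m₁ hm₁ m₂ hm₂).1
  have h₂ m₁ hm₁ m₂ hm₂ := (hperp m₁ hm₁ m₂ hm₂).2
  have := M₁.finite_of_projective_quotient
  have := M₂.finite_of_projective_quotient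
  have hsurj := middleQuotientPairing_surjective Ψ h12 h₁ h₂ fun m hm ↦
    mem_of_forall_apply_eq_zero_of_finrank_eq Ψ (hQ₂rank.trans hM₁rank.symm) h₂ hm
  refine ⟨middleQuotientPairing Ψ.toLinearMap M₁ M₂ h₁ h₂, fun _ _ ↦ rfl,
    LinearMap.injective_of_surjective_of_finrank_eq (finrank_dual_eq _).symm hsurj, hsurj⟩

/-- Let `R` be a commutative ring, `M` a finite free `R`-module of rank
`n`, `Ψ : M ≃ M*` an isomorphism, and `M₁ ⊆ M₂ ⊆ M` submodules with `M₁` free of rank `A`,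
`M₂/M₁` free of rank `n - 2A`, `M/M₂` free of rank `A`, `M/M₁` free, and `M₁ ⊥ M₂` under
`Ψ`.  Then the map `Ψ̄ : M₂/M₁ → (M₂/M₁)*`, `Ψ̄(m + M₁)(m' + M₁) = Ψ(m)(m')`, is a
well-defined `R`-module isomorphism; i.e. `Ψ` induces a perfect pairing on `M₂/M₁`. -/
theorem middle_quotient_perfect_pairing_of_perp
    (R : Type*) [CommRing R]
    (M : Type*) [AddCommGroup M] [Module R M]
    [Module.Free R M] [Module.Finite R M]
    (n A : ℕ) (hn : Module.finrank R M = n)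
    (Ψ : M ≃ₗ[R] Module.Dual R M)
    (M₁ M₂ : Submodule R M) (h12 : M₁ ≤ M₂)
    (hM₁free : Module.Free R M₁) (hM₁rank : Module.finrank R M₁ = A)
    (hMidfree : Module.Free R (M₂ ⧸ (M₁.comap M₂.subtype)))
    (hMidrank : Module.finrank R (M₂ ⧸ (M₁.comap M₂.subtype)) = n - 2 * A)
    (hQ₂free : Module.Free R (M ⧸ M₂)) (hQ₂rank : Module.finrank R (M ⧸ M₂) = A)
    (hQ₁free : Module.Free R (M ⧸ M₁))
    (hperp : ∀ m₁ ∈ M₁, ∀ m₂ ∈ M₂, Ψ m₁ m₂ = 0 ∧ Ψ m₂ m₁ = 0) :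
    ∃ Ψbar : (M₂ ⧸ (M₁.comap M₂.subtype)) →ₗ[R]
        Module.Dual R (M₂ ⧸ (M₁.comap M₂.subtype)),
      (∀ m m' : M₂,
        Ψbar (Submodule.Quotient.mk m) (Submodule.Quotient.mk m') = Ψ (m : M) (m' : M)) ∧
      Function.Bijective Ψbar :=
  middle_quotient_perfect_pairing_of_perp_general R M A Ψ M₁ M₂ h12 hM₁free hM₁rank hMidfree hQ₂free
    hQ₂rank hQ₁free hperp
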